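/- Let S ⊆ ℝ² be a Lebesgue-measurable set with finite measure m. Then for every x ∈ ℝ², the function w ↦ θ(x − w) is Lebesgue integrable over S and |∫_S θ(x − w) dw| ≤ √(m/π), where the absolute value on the left is the Euclidean norm of the vector-valued integral. -/

import Mathlib

open MeasureTheory Real Set Metric

/-- The vector field `θ(z) = (−z₂, z₁)/(2π|z|²)` on `ℝ² ≃ ℂ`. -/
noncomputable def theta (z : ℂ) : ℂ :=
  ((2 * Real.pi * ‖z‖ ^ 2)⁻¹ : ℝ) • (Complex.I * z)

lemma norm_theta (z : ℂ) : ‖theta z‖ = (2 * Real.pi * ‖z‖)⁻¹ := by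
  rcases eq_or_ne z 0 with rfl | hz
  · simp [theta]
  · have hz' : (0:ℝ) < ‖z‖ := norm_pos_iff.2 hz
    have hπ := Real.pi_pos
    rw [theta, norm_smul, Real.norm_eq_abs, norm_mul, Complex.norm_I, one_mul,
      abs_of_nonneg (by positivity)]
    have ha : (0:ℝ) < ‖z‖ := hz'
    field_simp

lemma measurable_theta : Measurable theta := by
  unfold theta
  fun_prop

lemma key_lintegral (S : Set ℂ) (hfin : volume S ≠ ⊤) (x : ℂ) :
    ∫⁻ w in S, ENNReal.ofReal ((2 * Real.pi * ‖x - w‖)⁻¹) ≤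
      ENNReal.ofReal (Real.sqrt ((volume S).toReal / Real.pi)) := by
  rcases eq_or_ne (volume S) 0 with h0 | h0
  · rw [Measure.restrict_eq_zero.2 h0, lintegral_zero_measure]
    exact zero_le
  have hπ := Real.pi_pos
  set M : ℝ := (volume S).toReal with hM
  have hMpos : 0 < M := ENNReal.toReal_pos h0 hfin
  set s : ℝ := Real.sqrt (Real.pi * M) with hs
  have hspos : 0 < s := Real.sqrt_pos.2 (by positivity)
  have hs2 : s ^ 2 = Real.pi * M := Real.sq_sqrt (by positivity)
  set t₀ : ℝ := (2 * s)⁻¹ with ht₀def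
  have ht₀ : 0 < t₀ := by positivity
  set f : ℂ → ℝ := fun w => (2 * Real.pi * ‖x - w‖)⁻¹ with hfdef
  have hfm : Measurable f := by fun_prop
  have hlayer : ∫⁻ w in S, ENNReal.ofReal (f w) =
      ∫⁻ t in Ioi (0:ℝ), (volume.restrict S) {w | t ≤ f w} :=
    lintegral_eq_lintegral_meas_le _ (ae_of_all _ fun w => by positivity)
      hfm.aemeasurable
  rw [hlayer]
  -- pointwise bounds on the superlevel-set measures
  have h1 : ∀ t : ℝ, (volume.restrict S) {w | t ≤ f w} ≤ volume S := fun t => by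
    calc (volume.restrict S) {w | t ≤ f w} ≤ (volume.restrict S) univ :=
          measure_mono (subset_univ _)
      _ = volume S := by simp
  have h2 : ∀ t ∈ Ioi (0:ℝ), (volume.restrict S) {w | t ≤ f w} ≤
      ENNReal.ofReal ((4 * Real.pi)⁻¹ * t ^ (-2:ℝ)) := by
    intro t ht
    have ht' : (0:ℝ) < t := ht
    have hsub : {w : ℂ | t ≤ f w} ⊆ closedBall x ((2 * Real.pi * t)⁻¹) := by
      intro w hw
      simp only [mem_setOf_eq, hfdef] at hw
      rcases eq_or_lt_of_le (norm_nonneg (x - w)) with hz | hz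
      · have : dist w x = 0 := by
          rw [dist_eq_norm, ← norm_neg, neg_sub, ← hz]
        simp [mem_closedBall, this]
        positivity
      · have ha : (0:ℝ) < 2 * Real.pi * ‖x - w‖ := by positivity
        have : 2 * Real.pi * ‖x - w‖ ≤ t⁻¹ := by
          rw [← inv_inv (2 * Real.pi * ‖x - w‖)]
          exact inv_anti₀ ht' hw
        have hnorm : ‖x - w‖ ≤ (2 * Real.pi * t)⁻¹ := by
          rw [show (2 * Real.pi * t)⁻¹ = t⁻¹ / (2 * Real.pi) by field_simp]
          rw [le_div_iff₀ (by positivity)] at *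
          linarith [this]
        rw [mem_closedBall, dist_eq_norm, ← norm_neg, neg_sub]
        exact hnorm
    calc (volume.restrict S) {w | t ≤ f w} ≤ volume (closedBall x ((2 * Real.pi * t)⁻¹)) := by
          refine le_trans (measure_mono hsub) ?_
          rw [Measure.restrict_apply measurableSet_closedBall]
          exact measure_mono inter_subset_left
      _ = ENNReal.ofReal ((4 * Real.pi)⁻¹ * t ^ (-2:ℝ)) := by
          rw [Complex.volume_closedBall]
          rw [← ENNReal.ofReal_pow (by positivity), ← ENNReal.ofReal_coe_nnreal,
            NNReal.coe_real_pi, ← ENNReal.ofReal_mul (by positivity)]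
          congr 1
          rw [Real.rpow_neg ht'.le, show ((2:ℝ)) = ((2:ℕ):ℝ) by norm_num,
            Real.rpow_natCast]
          field_simp
          ring
  -- split the integral at t₀
  rw [← Ioc_union_Ioi_eq_Ioi ht₀.le,
    lintegral_union measurableSet_Ioi (Ioc_disjoint_Ioi le_rfl)]
  have hpart1 : ∫⁻ t in Ioc (0:ℝ) t₀, (volume.restrict S) {w | t ≤ f w} ≤
      ENNReal.ofReal (M * t₀) := by
    calc ∫⁻ t in Ioc (0:ℝ) t₀, (volume.restrict S) {w | t ≤ f w}
        ≤ ∫⁻ _ in Ioc (0:ℝ) t₀, volume S := lintegral_mono fun t => h1 t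
      _ = volume S * volume (Ioc (0:ℝ) t₀) := by rw [setLIntegral_const]
      _ = ENNReal.ofReal (M * t₀) := by
          rw [Real.volume_Ioc, sub_zero, ← ENNReal.ofReal_toReal hfin, ← hM,
            ← ENNReal.ofReal_mul hMpos.le]
  have hpart2 : ∫⁻ t in Ioi t₀, (volume.restrict S) {w | t ≤ f w} ≤
      ENNReal.ofReal ((4 * Real.pi)⁻¹ * t₀⁻¹) := by
    have hint : IntegrableOn (fun t : ℝ => (4 * Real.pi)⁻¹ * t ^ (-2:ℝ)) (Ioi t₀) :=
      (integrableOn_Ioi_rpow_of_lt (by norm_num) ht₀).const_mul _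
    calc ∫⁻ t in Ioi t₀, (volume.restrict S) {w | t ≤ f w}
        ≤ ∫⁻ t in Ioi t₀, ENNReal.ofReal ((4 * Real.pi)⁻¹ * t ^ (-2:ℝ)) := by
          refine setLIntegral_mono (by fun_prop) fun t ht => h2 t (lt_trans ht₀ ht)
      _ = ENNReal.ofReal (∫ t in Ioi t₀, (4 * Real.pi)⁻¹ * t ^ (-2:ℝ)) := by
          rw [ofReal_integral_eq_lintegral_ofReal hint
            ((ae_restrict_iff' measurableSet_Ioi).2 (ae_of_all _ fun t ht =>
              mul_nonneg (by positivity) (Real.rpow_nonneg (lt_trans ht₀ ht).le _)))]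
      _ = ENNReal.ofReal ((4 * Real.pi)⁻¹ * t₀⁻¹) := by
          rw [MeasureTheory.integral_const_mul, integral_Ioi_rpow_of_lt (by norm_num) ht₀]
          norm_num
          rw [Real.rpow_neg_one]
  calc _ ≤ ENNReal.ofReal (M * t₀) + ENNReal.ofReal ((4 * Real.pi)⁻¹ * t₀⁻¹) :=
        add_le_add hpart1 hpart2
    _ = ENNReal.ofReal (M * t₀ + (4 * Real.pi)⁻¹ * t₀⁻¹) := by
        rw [← ENNReal.ofReal_add (by positivity) (by positivity)]
    _ = ENNReal.ofReal (Real.sqrt (M / Real.pi)) := by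
        congr 1
        have hsqrt : Real.sqrt (M / Real.pi) = s / Real.pi := by
          rw [show M / Real.pi = (s / Real.pi) ^ 2 by
            field_simp [hs2]; nlinarith [hs2], Real.sqrt_sq (by positivity)]
        rw [hsqrt, ht₀def]
        field_simp
        nlinarith [hs2]

theorem stmt10 (S : Set ℂ) (hS : MeasurableSet S) (hfin : volume S ≠ ⊤) (x : ℂ) :
    IntegrableOn (fun w : ℂ => theta (x - w)) S volume ∧
    ‖∫ w in S, theta (x - w)‖ ≤ Real.sqrt ((volume S).toReal / Real.pi) := by
  have hmeas : AEStronglyMeasurable (fun w : ℂ => theta (x - w)) (volume.restrict S) :=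
    (measurable_theta.comp (measurable_const.sub measurable_id)).aestronglyMeasurable
  have hkey : ∫⁻ w in S, ENNReal.ofReal ‖theta (x - w)‖ ≤
      ENNReal.ofReal (Real.sqrt ((volume S).toReal / Real.pi)) := by
    simp_rw [norm_theta]
    exact key_lintegral S hfin x
  have hint : IntegrableOn (fun w : ℂ => theta (x - w)) S volume := by
    refine ⟨hmeas, ?_⟩
    rw [hasFiniteIntegral_iff_norm]
    exact lt_of_le_of_lt hkey ENNReal.ofReal_lt_top
  refine ⟨hint, ?_⟩
  calc ‖∫ w in S, theta (x - w)‖ ≤ ∫ w in S, ‖theta (x - w)‖ :=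
        norm_integral_le_integral_norm _
    _ = (∫⁻ w in S, ENNReal.ofReal ‖theta (x - w)‖).toReal :=
        integral_eq_lintegral_of_nonneg_ae (ae_of_all _ fun w => norm_nonneg _) hmeas.norm
    _ ≤ Real.sqrt ((volume S).toReal / Real.pi) := by
        rw [← ENNReal.toReal_ofReal (Real.sqrt_nonneg ((volume S).toReal / Real.pi))]
        exact ENNReal.toReal_mono ENNReal.ofReal_ne_top hkey
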